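/- arXiv:1304.3121 — 5 statements merged into one kernel-verified Lean document; each statement's English description precedes it below -/
import Mathlib

section
/- Well-definedness of composition: for nets with boundaries M : l → m and N : m → n, the relation on minimal synchronisations given by (U,V) ⋈ (U′,V′) iff U ⋈ U′ or V ⋈ V′ is a contention relation for the net M ; N; that is, it is reflexive and symmetric, and whenever two minimal synchronisations have intersecting pre-sets, intersecting post-sets, intersecting left-boundary connections, or intersecting right-boundary connections in M ; N, they are related. -/
/-! Core definitions: nets with boundaries (Sobocinski et al.),
composition, tensor, isomorphism, step firing semantics, ports,
connections, networks, bases, wiring expressions and decompositions. -/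

namespace NWB

/-- A net with boundaries `N : k → l` (without the contention axioms,
which are packaged separately in `IsContention`). -/
structure NetB (k l : ℕ) : Type 1 where
  P : Type
  T : Type
  finP : Finite P
  finT : Finite T
  pre : T → Set P
  post : T → Set P
  src : T → Set (Fin k)
  tgt : T → Set (Fin l)
  con : T → T → Prop

/-- The contention relation axioms: reflexive, symmetric, and forced whenever
two transitions share a pre-place, post-place, or boundary port. -/
def IsContention {k l : ℕ} (N : NetB k l) : Prop :=
  (∀ t, N.con t t) ∧ (∀ t u, N.con t u → N.con u t) ∧
  (∀ t u,
    ((N.pre t ∩ N.pre u).Nonempty ∨ (N.post t ∩ N.post u).Nonempty ∨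
     (N.src t ∩ N.src u).Nonempty ∨ (N.tgt t ∩ N.tgt u).Nonempty) → N.con t u)

def setPre {k l : ℕ} (N : NetB k l) (U : Set N.T) : Set N.P := ⋃ u ∈ U, N.pre u
def setPost {k l : ℕ} (N : NetB k l) (U : Set N.T) : Set N.P := ⋃ u ∈ U, N.post u
def setSrc {k l : ℕ} (N : NetB k l) (U : Set N.T) : Set (Fin k) := ⋃ u ∈ U, N.src u
def setTgt {k l : ℕ} (N : NetB k l) (U : Set N.T) : Set (Fin l) := ⋃ u ∈ U, N.tgt u

/-- Mutually independent set of transitions: no two distinct members in contention. -/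
def MI {k l : ℕ} (N : NetB k l) (U : Set N.T) : Prop :=
  ∀ u ∈ U, ∀ v ∈ U, N.con u v → u = v

/-- Contention lifted to sets of transitions. -/
def setCon {k l : ℕ} (N : NetB k l) (U V : Set N.T) : Prop :=
  ∃ u ∈ U, ∃ v ∈ V, N.con u v

/-- A synchronisation between `M : l → m` and `N : m → n`. -/
structure Sync {l m n : ℕ} (M : NetB l m) (N : NetB m n) where
  U : Set M.T
  V : Set N.T
  miU : MI M U
  miV : MI N V
  bd : setTgt M U = setSrc N V

def Sync.Trivial {l m n : ℕ} {M : NetB l m} {N : NetB m n} (s : Sync M N) : Prop :=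
  s.U = ∅ ∧ s.V = ∅

/-- A minimal synchronisation: non-trivial, and every componentwise-smaller
synchronisation is trivial or equal to it. -/
def Sync.Minimal {l m n : ℕ} {M : NetB l m} {N : NetB m n} (s : Sync M N) : Prop :=
  ¬ s.Trivial ∧
  ∀ s' : Sync M N, s'.U ⊆ s.U → s'.V ⊆ s.V → (s'.Trivial ∨ (s'.U = s.U ∧ s'.V = s.V))

theorem sync_finite {l m n : ℕ} (M : NetB l m) (N : NetB m n) : Finite (Sync M N) := by
  haveI := M.finT; haveI := N.finT
  apply Finite.of_injective (fun s : Sync M N => (s.U, s.V))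
  intro s s' h
  simp only [Prod.mk.injEq] at h
  obtain ⟨h1, h2⟩ := h
  cases s; cases s'
  simp_all

/-- Composition along a common boundary. -/
def comp {l m n : ℕ} (M : NetB l m) (N : NetB m n) : NetB l n where
  P := M.P ⊕ N.P
  T := {s : Sync M N // s.Minimal}
  finP := by haveI := M.finP; haveI := N.finP; exact inferInstance
  finT := by haveI := sync_finite M N; exact inferInstance
  pre s := (Sum.inl '' setPre M s.1.U) ∪ (Sum.inr '' setPre N s.1.V)
  post s := (Sum.inl '' setPost M s.1.U) ∪ (Sum.inr '' setPost N s.1.V)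
  src s := setSrc M s.1.U
  tgt s := setTgt N s.1.V
  con s s' := setCon M s.1.U s'.1.U ∨ setCon N s.1.V s'.1.V

/-- Tensor product of nets with boundaries. -/
def tensor {l m k n : ℕ} (M : NetB l m) (N : NetB k n) : NetB (l + k) (m + n) where
  P := M.P ⊕ N.P
  T := M.T ⊕ N.T
  finP := by haveI := M.finP; haveI := N.finP; exact inferInstance
  finT := by haveI := M.finT; haveI := N.finT; exact inferInstance
  pre t := match t with
    | Sum.inl t => Sum.inl '' M.pre t
    | Sum.inr t => Sum.inr '' N.pre t
  post t := match t with
    | Sum.inl t => Sum.inl '' M.post t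
    | Sum.inr t => Sum.inr '' N.post t
  src t := match t with
    | Sum.inl t => Fin.castAdd k '' M.src t
    | Sum.inr t => Fin.natAdd l '' N.src t
  tgt t := match t with
    | Sum.inl t => Fin.castAdd n '' M.tgt t
    | Sum.inr t => Fin.natAdd m '' N.tgt t
  con t u := match t, u with
    | Sum.inl t, Sum.inl u => M.con t u
    | Sum.inr t, Sum.inr u => N.con t u
    | _, _ => False

/-- Isomorphism of nets with boundaries: bijections on places and transitions
preserving pre-sets, post-sets, boundary maps and contention. -/
structure NetIso {k l : ℕ} (M N : NetB k l) where
  ep : M.P ≃ N.P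
  et : M.T ≃ N.T
  pre_eq : ∀ t, N.pre (et t) = ep '' M.pre t
  post_eq : ∀ t, N.post (et t) = ep '' M.post t
  src_eq : ∀ t, N.src (et t) = M.src t
  tgt_eq : ∀ t, N.tgt (et t) = M.tgt t
  con_iff : ∀ t u, N.con (et t) (et u) ↔ M.con t u

def Iso {k l : ℕ} (M N : NetB k l) : Prop := Nonempty (NetIso M N)

/-- Transport a net along equalities of its boundary sizes. -/
def castNet {k l k' l' : ℕ} (h1 : k = k') (h2 : l = l') (N : NetB k l) : NetB k' l' where
  P := N.P
  T := N.T
  finP := N.finP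
  finT := N.finT
  pre := N.pre
  post := N.post
  src t := Fin.cast h1 '' N.src t
  tgt t := Fin.cast h2 '' N.tgt t
  con := N.con

def emptyNet : NetB 0 0 where
  P := Empty
  T := Empty
  finP := inferInstance
  finT := inferInstance
  pre t := t.elim
  post t := t.elim
  src t := t.elim
  tgt t := t.elim
  con t _ := t.elim

/-- The step firing semantics: `Fires N X X' α β` iff the LTS `⟦N⟧` has a
transition `X →⟨α,β⟩ X'`. -/
def Fires {k l : ℕ} (N : NetB k l) (X X' : Set N.P) (α : Set (Fin k)) (β : Set (Fin l)) :
    Prop :=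
  ∃ U : Set N.T, MI N U ∧ setPre N U ⊆ X ∧ setPost N U ∩ X = ∅ ∧
    X' = (X \ setPre N U) ∪ setPost N U ∧ setSrc N U = α ∧ setTgt N U = β

/-! ### Ports, connections and networks -/

/-- The ports of a net: an in-port and an out-port for each place,
together with the left and right boundary ports. -/
def Port {k l : ℕ} (N : NetB k l) : Type := (N.P ⊕ N.P) ⊕ (Fin k ⊕ Fin l)

def portIn {k l : ℕ} {N : NetB k l} (p : N.P) : Port N := Sum.inl (Sum.inl p)
def portOut {k l : ℕ} {N : NetB k l} (p : N.P) : Port N := Sum.inl (Sum.inr p)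
def bLeft {k l : ℕ} {N : NetB k l} (i : Fin k) : Port N := Sum.inr (Sum.inl i)
def bRight {k l : ℕ} {N : NetB k l} (j : Fin l) : Port N := Sum.inr (Sum.inr j)

/-- The portset of a transition. -/
def tports {k l : ℕ} (N : NetB k l) (t : N.T) : Set (Port N) :=
  (portOut '' N.pre t) ∪ (portIn '' N.post t) ∪ (bLeft '' N.src t) ∪ (bRight '' N.tgt t)

/-- The connection of a port `q`: the portsets (minus `q`) of all transitions
properly connecting to `q`. -/
def conn {k l : ℕ} (N : NetB k l) (q : Port N) : Set (Set (Port N)) :=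
  { K | ∃ t : N.T, {q} ⊂ tports N t ∧ K = tports N t \ {q} }

/-- The connection of `q` restricted to a set `R` of ports. -/
def connR {k l : ℕ} (N : NetB k l) (R : Set (Port N)) (q : Port N) :
    Set (Set (Port N)) :=
  { K' | ∃ K ∈ conn N q, (K ∩ R).Nonempty ∧ K' = K ∩ R }

/-- Extended ports of the left part of an oriented partition. -/
def eportsL {k l : ℕ} (N : NetB k l) (Pl : Set N.P) : Set (Port N) :=
  (portIn '' Pl) ∪ (portOut '' Pl) ∪ Set.range (bLeft (N := N))

/-- Extended ports of the right part of an oriented partition. -/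
def eportsR {k l : ℕ} (N : NetB k l) (Pr : Set N.P) : Set (Port N) :=
  (portIn '' Pr) ∪ (portOut '' Pr) ∪ Set.range (bRight (N := N))

/-- The network `net(P_l → P_r)`. -/
def networkLR {k l : ℕ} (N : NetB k l) (Pl Pr : Set N.P) :
    Set (Set (Set (Port N))) :=
  { c | ∃ q ∈ eportsL N Pl, c = connR N (eportsR N Pr) q }

/-- The network `net(P_r → P_l)`. -/
def networkRL {k l : ℕ} (N : NetB k l) (Pl Pr : Set N.P) :
    Set (Set (Set (Port N))) :=
  { c | ∃ q ∈ eportsR N Pr, c = connR N (eportsL N Pl) q }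

/-- `b` is a basis of the network `M`: every connection in `M` is a union of
basis connections. -/
def IsBasis {C : Type} {m : ℕ} (b : Fin m → Set C) (M : Set (Set C)) : Prop :=
  ∀ c ∈ M, ∃ S : Finset (Fin m), c = ⋃ i ∈ S, b i

/-- The dimension of a network: the size of its smallest basis. -/
noncomputable def netDim {C : Type} (M : Set (Set C)) : ℕ :=
  sInf { m | ∃ b : Fin m → Set C, IsBasis b M }

/-- Purity of a composition `N_l ; N_r`: no transition of either component
connects to two different shared boundary ports. -/
def Pure {k n l : ℕ} (Nl : NetB k n) (Nr : NetB n l) : Prop :=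
  (∀ j : Fin n, ∀ K ∈ conn Nl (bRight j), ∀ i : Fin n, bRight i ∉ K) ∧
  (∀ j : Fin n, ∀ K ∈ conn Nr (bLeft j), ∀ i : Fin n, bLeft i ∉ K)

/-! ### Wiring expressions and decompositions -/

/-- Nets with boundaries of arbitrary boundary sizes. -/
def NetS : Type 1 := Σ (k : ℕ) (l : ℕ), NetB k l

/-- Composition on `NetS` (junk value on boundary mismatch). -/
def seqS (X Y : NetS) : NetS :=
  if h : X.2.1 = Y.1 then ⟨X.1, Y.2.1, comp (castNet rfl h X.2.2) Y.2.2⟩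
  else ⟨0, 0, emptyNet⟩

def tenS (X Y : NetS) : NetS := ⟨X.1 + Y.1, X.2.1 + Y.2.1, tensor X.2.2 Y.2.2⟩

/-- Wiring expressions: binary trees with `;` and `⊗` nodes and variables at
the leaves. -/
inductive WExpr (V : Type) : Type
  | leaf : V → WExpr V
  | seq : WExpr V → WExpr V → WExpr V
  | ten : WExpr V → WExpr V → WExpr V

/-- Semantics of a wiring expression under a variable assignment. -/
def sem {V : Type} (A : V → NetS) : WExpr V → NetS
  | .leaf x => A x
  | .seq t₁ t₂ => seqS (sem A t₁) (sem A t₂)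
  | .ten t₁ t₂ => tenS (sem A t₁) (sem A t₂)

/-- Compatibility of an assignment with an expression: at each `;` node the
shared boundaries match. -/
def WT {V : Type} (A : V → NetS) : WExpr V → Prop
  | .leaf _ => True
  | .seq t₁ t₂ => WT A t₁ ∧ WT A t₂ ∧ (sem A t₁).2.1 = (sem A t₂).1
  | .ten t₁ t₂ => WT A t₁ ∧ WT A t₂

/-- The wiring decomposition `(t, A)` has width `w`: every leaf net has
boundaries and number of places `≤ w`, and every subexpression has
boundaries `≤ w`. -/
def HasWidth {V : Type} (A : V → NetS) (w : ℕ) : WExpr V → Prop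
  | .leaf x => (A x).1 ≤ w ∧ Nat.card (A x).2.2.P ≤ w ∧ (A x).2.1 ≤ w
  | .seq t₁ t₂ => HasWidth A w t₁ ∧ HasWidth A w t₂ ∧
      (sem A (.seq t₁ t₂)).1 ≤ w ∧ (sem A (.seq t₁ t₂)).2.1 ≤ w
  | .ten t₁ t₂ => HasWidth A w t₁ ∧ HasWidth A w t₂ ∧
      (sem A (.ten t₁ t₂)).1 ≤ w ∧ (sem A (.ten t₁ t₂)).2.1 ≤ w

/-- `(t, A)` is a wiring decomposition of `N : k → l`: the assignment maps
variables to genuine nets with boundaries, is compatible with `t`, and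
`⟦t⟧_A ≅ N`. -/
def IsDecompOf {V : Type} {k l : ℕ} (A : V → NetS) (t : WExpr V) (N : NetB k l) : Prop :=
  (∀ x, IsContention (A x).2.2) ∧ WT A t ∧
  ∃ (h1 : (sem A t).1 = k) (h2 : (sem A t).2.1 = l),
    Iso (castNet h1 h2 (sem A t).2.2) N

/-- A net has decomposition width `w` if it has a wiring decomposition of
width `w`. -/
def HasDecompWidth {k l : ℕ} (N : NetB k l) (w : ℕ) : Prop :=
  ∃ (Var : Type) (A : Var → NetS) (t : WExpr Var),
    IsDecompOf A t N ∧ HasWidth A w t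

/-- A pure wiring decomposition: at every `;` node the composition of the two
subexpression nets is pure. -/
def PureExpr {V : Type} (A : V → NetS) : WExpr V → Prop
  | .leaf _ => True
  | .seq t₁ t₂ => PureExpr A t₁ ∧ PureExpr A t₂ ∧
      ∀ (h : (sem A t₁).2.1 = (sem A t₂).1),
        Pure (castNet rfl h (sem A t₁).2.2) (sem A t₂).2.2
  | .ten t₁ t₂ => PureExpr A t₁ ∧ PureExpr A t₂

/-- One step of reassociation of `;` or `⊗`, anywhere inside an expression. -/
inductive AssocStep {V : Type} : WExpr V → WExpr V → Prop
  | seqAssoc (a b c : WExpr V) : AssocStep (.seq (.seq a b) c) (.seq a (.seq b c))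
  | tenAssoc (a b c : WExpr V) : AssocStep (.ten (.ten a b) c) (.ten a (.ten b c))
  | seqCongrL {a a' : WExpr V} (b : WExpr V) :
      AssocStep a a' → AssocStep (.seq a b) (.seq a' b)
  | seqCongrR (a : WExpr V) {b b' : WExpr V} :
      AssocStep b b' → AssocStep (.seq a b) (.seq a b')
  | tenCongrL {a a' : WExpr V} (b : WExpr V) :
      AssocStep a a' → AssocStep (.ten a b) (.ten a' b)
  | tenCongrR (a : WExpr V) {b b' : WExpr V} :
      AssocStep b b' → AssocStep (.ten a b) (.ten a b')

/-- Equivalence of wiring expressions up to associativity of `;` and `⊗`. -/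
def AssocEquiv {V : Type} : WExpr V → WExpr V → Prop := Relation.EqvGen AssocStep

/-! ### Concrete families of nets -/

/-- The clique net `C_n : 0 → 0`, with the minimal contention relation. -/
def clique (n : ℕ) : NetB 0 0 where
  P := Fin n
  T := {p : Fin n × Fin n // p.1 ≠ p.2}
  finP := inferInstance
  finT := inferInstance
  pre t := {t.1.1}
  post t := {t.1.2}
  src _ := ∅
  tgt _ := ∅
  con t u := t.1.1 = u.1.1 ∨ t.1.2 = u.1.2

/-- The subset net `P_n : 0 → 0`: a place `S` (= `none`), places `[n]`, and for
each `A ⊆ [n]` a transition `S → A`; the minimal contention relation is total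
since all pre-sets are `{S}`. -/
def subsetNet (n : ℕ) : NetB 0 0 where
  P := Option (Fin n)
  T := Set (Fin n)
  finP := inferInstance
  finT := inferInstance
  pre _ := {none}
  post A := some '' A
  src _ := ∅
  tgt _ := ∅
  con _ _ := True

/-- The tree net `T_Δ^{n,k} : 0 → 0`: places are nodes of the complete n-ary
tree of depth k (lists over `Fin n` of length ≤ k); each non-leaf node has a
single transition to the set of its n children. The minimal contention
relation is equality. -/
def treeD (n k : ℕ) : NetB 0 0 where
  P := {l : List (Fin n) // l.length ≤ k}
  T := {l : List (Fin n) // l.length < k}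
  finP := (List.finite_length_le (Fin n) k).to_subtype
  finT := (List.finite_length_lt (Fin n) k).to_subtype
  pre t := {⟨t.1, t.2.le⟩}
  post t := {p | ∃ i : Fin n, p.1 = t.1 ++ [i]}
  src _ := ∅
  tgt _ := ∅
  con t u := t = u

/-- The tree net `T_Λ^{n,k} : 0 → 0`: as `T_Δ^{n,k}` but with a separate
transition from each non-leaf node to each of its children. The minimal
contention relation relates transitions with the same parent node. -/
def treeL (n k : ℕ) : NetB 0 0 where
  P := {l : List (Fin n) // l.length ≤ k}
  T := {l : List (Fin n) // l.length < k} × Fin n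
  finP := (List.finite_length_le (Fin n) k).to_subtype
  finT := by
    haveI : Finite {l : List (Fin n) // l.length < k} :=
      (List.finite_length_lt (Fin n) k).to_subtype
    exact inferInstance
  pre t := {⟨t.1.1, t.1.2.le⟩}
  post t := {p | p.1 = t.1.1 ++ [t.2]}
  src _ := ∅
  tgt _ := ∅
  con t u := t.1 = u.1

/-- The grid net `G_n : 0 → 0`: places `[n] × [n]`, a transition from each
place to its right neighbour and to its lower neighbour; the minimal
contention relation relates transitions sharing a pre-place or post-place. -/
def grid (n : ℕ) : NetB 0 0 where
  P := Fin n × Fin n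
  T := {e : (Fin n × Fin n) × (Fin n × Fin n) //
        (e.2.1 = e.1.1 ∧ (e.2.2 : ℕ) = (e.1.2 : ℕ) + 1) ∨
        ((e.2.1 : ℕ) = (e.1.1 : ℕ) + 1 ∧ e.2.2 = e.1.2)}
  finP := inferInstance
  finT := inferInstance
  pre e := {e.1.1}
  post e := {e.1.2}
  src _ := ∅
  tgt _ := ∅
  con t u := t.1.1 = u.1.1 ∨ t.1.2 = u.1.2

end NWB

namespace NWB

theorem inl_image_union_inr_image_inter_nonempty {α β : Type*} {A A' : Set α} {B B' : Set β} :
    ((Sum.inl '' A ∪ Sum.inr '' B) ∩ (Sum.inl '' A' ∪ Sum.inr '' B')).Nonempty ↔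
      (A ∩ A').Nonempty ∨ (B ∩ B').Nonempty := by
  simp only [Set.union_inter_distrib_right, Set.inter_union_distrib_left, Set.union_nonempty,
    ← Set.image_inter Sum.inl_injective, ← Set.image_inter Sum.inr_injective, Set.image_nonempty,
    Set.disjoint_image_inl_image_inr.inter_eq, Set.disjoint_image_inl_image_inr.symm.inter_eq,
    Set.not_nonempty_empty, or_false, false_or]

section SetCon

variable {k l : ℕ} {N : NetB k l} {U V : Set N.T}

theorem setCon_comm (hsymm : ∀ t u, N.con t u → N.con u t) (h : setCon N U V) :
    setCon N V U := by
  obtain ⟨u, hu, v, hv, huv⟩ := h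
  exact ⟨v, hv, u, hu, hsymm u v huv⟩

theorem setCon_self (hrefl : ∀ t, N.con t t) (hU : U.Nonempty) : setCon N U U := by
  obtain ⟨u, hu⟩ := hU
  exact ⟨u, hu, u, hu, hrefl u⟩

theorem setCon_of_biUnion_inter_nonempty {α : Type*} {f : N.T → Set α}
    (hf : ∀ t u, (f t ∩ f u).Nonempty → N.con t u)
    (h : ((⋃ t ∈ U, f t) ∩ ⋃ u ∈ V, f u).Nonempty) : setCon N U V := by
  obtain ⟨x, hxU, hxV⟩ := h
  obtain ⟨t, ht, hxt⟩ := Set.mem_iUnion₂.1 hxU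
  obtain ⟨u, hu, hxu⟩ := Set.mem_iUnion₂.1 hxV
  exact ⟨t, ht, u, hu, hf t u ⟨x, hxt, hxu⟩⟩

namespace IsContention

theorem setCon_of_setPre (hN : IsContention N)
    (h : (setPre N U ∩ setPre N V).Nonempty) : setCon N U V :=
  setCon_of_biUnion_inter_nonempty (fun t u htu => hN.2.2 t u (Or.inl htu)) h

theorem setCon_of_setPost (hN : IsContention N)
    (h : (setPost N U ∩ setPost N V).Nonempty) : setCon N U V :=
  setCon_of_biUnion_inter_nonempty (fun t u htu => hN.2.2 t u (Or.inr (Or.inl htu))) h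

theorem setCon_of_setSrc (hN : IsContention N)
    (h : (setSrc N U ∩ setSrc N V).Nonempty) : setCon N U V :=
  setCon_of_biUnion_inter_nonempty (fun t u htu => hN.2.2 t u (Or.inr (Or.inr (Or.inl htu)))) h

theorem setCon_of_setTgt (hN : IsContention N)
    (h : (setTgt N U ∩ setTgt N V).Nonempty) : setCon N U V :=
  setCon_of_biUnion_inter_nonempty (fun t u htu => hN.2.2 t u (Or.inr (Or.inr (Or.inr htu)))) h

end IsContention

end SetCon

theorem Sync.not_trivial_iff {l m n : ℕ} {M : NetB l m} {N : NetB m n} (s : Sync M N) :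
    ¬ s.Trivial ↔ s.U.Nonempty ∨ s.V.Nonempty := by
  rw [Sync.Trivial, not_and_or, Set.nonempty_iff_ne_empty, Set.nonempty_iff_ne_empty]

/-- Well-definedness of composition: for nets with
boundaries `M : l → m`, `N : m → n`, the relation on minimal
synchronisations given by `(U,V) ⋈ (U′,V′)` iff `U ⋈ U′` or `V ⋈ V′` is a
contention relation for `M ; N`: reflexive, symmetric, and relating any two
minimal synchronisations with intersecting pre-sets, post-sets,
left-boundary connections, or right-boundary connections. -/
theorem comp_isContention {l m n : ℕ} (M : NetB l m) (N : NetB m n)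
    (hM : IsContention M) (hN : IsContention N) :
    IsContention (comp M N) := by
  refine ⟨fun s => ?_, fun s s' => ?_, fun s s' h => ?_⟩
  · exact ((Sync.not_trivial_iff s.1).1 s.2.1).imp (setCon_self hM.1) (setCon_self hN.1)
  · exact Or.imp (setCon_comm hM.2.1) (setCon_comm hN.2.1)
  rcases h with h | h | h | h
  · exact (inl_image_union_inr_image_inter_nonempty.1 h).imp
      hM.setCon_of_setPre hN.setCon_of_setPre
  · exact (inl_image_union_inr_image_inter_nonempty.1 h).imp
      hM.setCon_of_setPost hN.setCon_of_setPost
  · exact Or.inl (hM.setCon_of_setSrc h)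
  · exact Or.inr (hN.setCon_of_setTgt h)

end NWB
end

section
/- Compositionality of ';' with respect to the step firing semantics: for nets with boundaries M : l → m and N : m → n and markings X, X′ ⊆ P_M, Y, Y′ ⊆ P_N, there is a transition (X+Y) →⟨α,β⟩ (X′+Y′) in the labelled transition system ⟦M ; N⟧ if and only if there exists γ ⊆ [m] such that X →⟨α,γ⟩ X′ in ⟦M⟧ and Y →⟨γ,β⟩ Y′ in ⟦N⟧. -/
/-! A mutually independent set `W` of transitions of `M ; N`, i.e. of minimal synchronisations,
fires exactly like the pair formed by the union of its left components in `M` and the union of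
its right components in `N`; these two sets are mutually independent and agree on the shared
boundary `γ`. Conversely, steps of `M` and `N` agreeing on `γ` form a synchronisation `s`, and the
minimal synchronisations below `s` cover it and are mutually independent: by the contention
axioms the difference of two synchronisations below `s` is again one, so two minimal ones
sharing a transition coincide, and every non-minimal `s` splits into two strictly smaller ones. -/

namespace NWB

section SumSets

variable {α β : Type*} {A X : Set α} {B Y : Set β}

theorem inl_image_union_inr_image_subset_iff :
    (Sum.inl '' A ∪ Sum.inr '' B : Set (α ⊕ β)) ⊆ Sum.inl '' X ∪ Sum.inr '' Y ↔
      A ⊆ X ∧ B ⊆ Y := by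
  simp [Set.subset_def, Sum.forall]

theorem inl_image_union_inr_image_inter_eq_empty_iff :
    (Sum.inl '' A ∪ Sum.inr '' B : Set (α ⊕ β)) ∩ (Sum.inl '' X ∪ Sum.inr '' Y) = ∅ ↔
      A ∩ X = ∅ ∧ B ∩ Y = ∅ := by
  simp only [Set.eq_empty_iff_forall_notMem, Sum.forall]
  simp

theorem inl_image_union_inr_image_inj :
    (Sum.inl '' A ∪ Sum.inr '' B : Set (α ⊕ β)) = Sum.inl '' X ∪ Sum.inr '' Y ↔
      A = X ∧ B = Y := by
  simp [Set.ext_iff, Sum.forall]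

theorem inl_image_union_inr_image_sdiff_union (C : Set α) (D : Set β) :
    (Sum.inl '' X ∪ Sum.inr '' Y : Set (α ⊕ β)) \ (Sum.inl '' A ∪ Sum.inr '' B) ∪
        (Sum.inl '' C ∪ Sum.inr '' D) =
      Sum.inl '' (X \ A ∪ C) ∪ Sum.inr '' (Y \ B ∪ D) := by
  ext (x | y) <;> simp

end SumSets

variable {k l m n : ℕ}

theorem MI.mono {N : NetB k l} {U V : Set N.T} (hV : MI N V) (hUV : U ⊆ V) : MI N U :=
  fun u hu v hv => hV u (hUV hu) v (hUV hv)

theorem MI.pairwiseDisjoint_src {N : NetB k l} (hN : IsContention N) {U : Set N.T}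
    (hU : MI N U) : U.PairwiseDisjoint N.src := fun u hu v hv huv =>
  Set.disjoint_left.mpr fun _ hi hi' =>
    huv (hU u hu v hv (hN.2.2 u v (Or.inr (Or.inr (Or.inl ⟨_, hi, hi'⟩)))))

theorem MI.pairwiseDisjoint_tgt {N : NetB k l} (hN : IsContention N) {U : Set N.T}
    (hU : MI N U) : U.PairwiseDisjoint N.tgt := fun u hu v hv huv =>
  Set.disjoint_left.mpr fun _ hi hi' =>
    huv (hU u hu v hv (hN.2.2 u v (Or.inr (Or.inr (Or.inr ⟨_, hi, hi'⟩)))))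

theorem setSrc_sdiff {N : NetB k l} (hN : IsContention N) {U U' : Set N.T}
    (h : MI N (U ∪ U')) : setSrc N (U \ U') = setSrc N U \ setSrc N U' :=
  (Set.biUnion_sdiff_biUnion_eq (h.pairwiseDisjoint_src hN)).symm

theorem setTgt_sdiff {N : NetB k l} (hN : IsContention N) {U U' : Set N.T}
    (h : MI N (U ∪ U')) : setTgt N (U \ U') = setTgt N U \ setTgt N U' :=
  (Set.biUnion_sdiff_biUnion_eq (h.pairwiseDisjoint_tgt hN)).symm

namespace Sync

variable {M : NetB l m} {N : NetB m n}

theorem ext {s t : Sync M N} (hU : s.U = t.U) (hV : s.V = t.V) : s = t := by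
  cases s; cases t; cases hU; cases hV; rfl

instance : PartialOrder (Sync M N) :=
  PartialOrder.lift (fun s => (s.U, s.V)) fun _ _ h =>
    ext (congrArg Prod.fst h) (congrArg Prod.snd h)

theorem le_def {s t : Sync M N} : s ≤ t ↔ s.U ⊆ t.U ∧ s.V ⊆ t.V := Iff.rfl

instance : Finite (Sync M N) := sync_finite M N

theorem minimal_iff {s : Sync M N} :
    s.Minimal ↔ ¬s.Trivial ∧ ∀ s' ≤ s, s'.Trivial ∨ s' = s := by
  simp only [Minimal, le_def, and_imp]
  refine and_congr_right fun _ => forall_congr' fun s' => ?_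
  have hext : s'.U = s.U ∧ s'.V = s.V ↔ s' = s :=
    ⟨fun h => ext h.1 h.2, fun h => h ▸ ⟨rfl, rfl⟩⟩
  rw [hext]

/-- Contention on shared boundary ports is what makes the difference a synchronisation again. -/
def sdiff (hM : IsContention M) (hN : IsContention N) (s s' : Sync M N)
    (hU : MI M (s.U ∪ s'.U)) (hV : MI N (s.V ∪ s'.V)) : Sync M N where
  U := s.U \ s'.U
  V := s.V \ s'.V
  miU := s.miU.mono Set.sdiff_subset
  miV := s.miV.mono Set.sdiff_subset
  bd := by rw [setTgt_sdiff hM hU, setSrc_sdiff hN hV, s.bd, s'.bd]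

theorem Minimal.eq_of_not_disjoint (hM : IsContention M) (hN : IsContention N)
    {r t t' : Sync M N} (ht : t.Minimal) (ht' : t'.Minimal) (htr : t ≤ r) (ht'r : t' ≤ r)
    (hdisj : ¬(Disjoint t.U t'.U ∧ Disjoint t.V t'.V)) : t = t' := by
  let d := sdiff hM hN t t' (r.miU.mono (Set.union_subset htr.1 ht'r.1))
    (r.miV.mono (Set.union_subset htr.2 ht'r.2))
  rcases (minimal_iff.mp ht).2 d ⟨Set.sdiff_subset, Set.sdiff_subset⟩ with hd | hd
  · have htt' : t ≤ t' := ⟨Set.sdiff_eq_empty.mp hd.1, Set.sdiff_eq_empty.mp hd.2⟩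
    exact ((minimal_iff.mp ht').2 t htt').resolve_left (minimal_iff.mp ht).1
  · exact absurd ⟨sdiff_eq_left.mp (congrArg U hd), sdiff_eq_left.mp (congrArg V hd)⟩ hdisj

def minimalsBelow (s : Sync M N) : Set (comp M N).T := {t | t.1 ≤ s}

theorem subset_biUnion_minimalsBelow (hM : IsContention M) (hN : IsContention N)
    (s : Sync M N) :
    s.U ⊆ ⋃ t ∈ s.minimalsBelow, t.1.U ∧ s.V ⊆ ⋃ t ∈ s.minimalsBelow, t.1.V := by
  induction s using WellFoundedLT.induction with
  | _ s ih =>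
  by_cases hmin : s.Minimal
  · have hs : (⟨s, hmin⟩ : (comp M N).T) ∈ s.minimalsBelow := le_refl s
    exact ⟨fun u hu => Set.mem_biUnion hs hu, fun v hv => Set.mem_biUnion hs hv⟩
  by_cases htriv : s.Trivial
  · simp [htriv.1, htriv.2]
  obtain ⟨s', hle, hnt, hne⟩ : ∃ s' ≤ s, ¬s'.Trivial ∧ s' ≠ s := by
    simpa [minimal_iff, htriv] using hmin
  obtain ⟨hleU, hleV⟩ := le_def.mp hle
  let r := sdiff hM hN s s' (s.miU.mono (Set.union_subset subset_rfl hleU))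
    (s.miV.mono (Set.union_subset subset_rfl hleV))
  have hr : r < s := by
    refine lt_of_le_of_ne ⟨Set.sdiff_subset, Set.sdiff_subset⟩ fun h => hnt ?_
    exact ⟨(sdiff_eq_left.mp (congrArg U h)).symm.eq_bot_of_le hleU,
      (sdiff_eq_left.mp (congrArg V h)).symm.eq_bot_of_le hleV⟩
  have cover : ∀ a < s,
      a.U ⊆ ⋃ t ∈ s.minimalsBelow, t.1.U ∧ a.V ⊆ ⋃ t ∈ s.minimalsBelow, t.1.V := by
    intro a ha
    have hmono : a.minimalsBelow ⊆ s.minimalsBelow := fun t ht => le_trans ht ha.le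
    exact (ih a ha).imp (·.trans (Set.biUnion_subset_biUnion_left hmono))
      (·.trans (Set.biUnion_subset_biUnion_left hmono))
  obtain ⟨hU', hV'⟩ := cover s' (lt_of_le_of_ne hle hne)
  obtain ⟨hUr, hVr⟩ := cover r hr
  exact ⟨Set.union_sdiff_cancel hleU ▸ Set.union_subset hU' hUr,
    Set.union_sdiff_cancel hleV ▸ Set.union_subset hV' hVr⟩

end Sync

section Comp

variable {M : NetB l m} {N : NetB m n}

def compLeft (W : Set (comp M N).T) : Set M.T := ⋃ t ∈ W, t.1.U

def compRight (W : Set (comp M N).T) : Set N.T := ⋃ t ∈ W, t.1.V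

theorem setPre_comp (W : Set (comp M N).T) :
    setPre (comp M N) W =
      Sum.inl '' setPre M (compLeft W) ∪ Sum.inr '' setPre N (compRight W) := by
  show ⋃ t ∈ W, (Sum.inl '' setPre M t.1.U ∪ Sum.inr '' setPre N t.1.V) = _
  simp only [setPre, compLeft, compRight, Set.biUnion_iUnion, Set.image_iUnion₂,
    Set.iUnion_union_distrib]

theorem setPost_comp (W : Set (comp M N).T) :
    setPost (comp M N) W =
      Sum.inl '' setPost M (compLeft W) ∪ Sum.inr '' setPost N (compRight W) := by
  show ⋃ t ∈ W, (Sum.inl '' setPost M t.1.U ∪ Sum.inr '' setPost N t.1.V) = _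
  simp only [setPost, compLeft, compRight, Set.biUnion_iUnion, Set.image_iUnion₂,
    Set.iUnion_union_distrib]

theorem setSrc_comp (W : Set (comp M N).T) : setSrc (comp M N) W = setSrc M (compLeft W) := by
  simp only [setSrc, compLeft, Set.biUnion_iUnion]; rfl

theorem setTgt_comp (W : Set (comp M N).T) : setTgt (comp M N) W = setTgt N (compRight W) := by
  simp only [setTgt, compRight, Set.biUnion_iUnion]; rfl

theorem setTgt_compLeft (W : Set (comp M N).T) :
    setTgt M (compLeft W) = setSrc N (compRight W) := by
  simp only [setTgt, setSrc, compLeft, compRight, Set.biUnion_iUnion]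
  exact Set.iUnion₂_congr fun t _ => t.1.bd

theorem MI.compLeft {W : Set (comp M N).T} (hW : MI (comp M N) W) : MI M (compLeft W) := by
  intro u hu v hv huv
  obtain ⟨t, ht, hut⟩ := Set.mem_iUnion₂.mp hu
  obtain ⟨t', ht', hvt'⟩ := Set.mem_iUnion₂.mp hv
  obtain rfl := hW t ht t' ht' (Or.inl ⟨u, hut, v, hvt', huv⟩)
  exact t.1.miU u hut v hvt' huv

theorem MI.compRight {W : Set (comp M N).T} (hW : MI (comp M N) W) : MI N (compRight W) := by
  intro u hu v hv huv
  obtain ⟨t, ht, hut⟩ := Set.mem_iUnion₂.mp hu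
  obtain ⟨t', ht', hvt'⟩ := Set.mem_iUnion₂.mp hv
  obtain rfl := hW t ht t' ht' (Or.inr ⟨u, hut, v, hvt', huv⟩)
  exact t.1.miV u hut v hvt' huv

theorem Sync.mi_comp_minimalsBelow (hM : IsContention M) (hN : IsContention N) (s : Sync M N) :
    MI (comp M N) s.minimalsBelow := by
  rintro t ht t' ht' (⟨u, hu, u', hu', huu'⟩ | ⟨v, hv, v', hv', hvv'⟩)
  · obtain rfl := s.miU u (ht.1 hu) u' (ht'.1 hu') huu'
    exact Subtype.ext (t.2.eq_of_not_disjoint hM hN t'.2 ht ht' fun h =>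
      Set.disjoint_left.mp h.1 hu hu')
  · obtain rfl := s.miV v (ht.2 hv) v' (ht'.2 hv') hvv'
    exact Subtype.ext (t.2.eq_of_not_disjoint hM hN t'.2 ht ht' fun h =>
      Set.disjoint_left.mp h.2 hv hv')

theorem Sync.compLeft_minimalsBelow (hM : IsContention M) (hN : IsContention N)
    (s : Sync M N) : compLeft s.minimalsBelow = s.U :=
  (Set.iUnion₂_subset fun _ ht => ht.1).antisymm (subset_biUnion_minimalsBelow hM hN s).1

theorem Sync.compRight_minimalsBelow (hM : IsContention M) (hN : IsContention N)
    (s : Sync M N) : compRight s.minimalsBelow = s.V :=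
  (Set.iUnion₂_subset fun _ ht => ht.2).antisymm (subset_biUnion_minimalsBelow hM hN s).2

end Comp

def IsStep (N : NetB k l) (U : Set N.T) (X X' : Set N.P) : Prop :=
  setPre N U ⊆ X ∧ setPost N U ∩ X = ∅ ∧ X' = X \ setPre N U ∪ setPost N U

theorem fires_iff {N : NetB k l} {X X' : Set N.P} {α : Set (Fin k)} {β : Set (Fin l)} :
    Fires N X X' α β ↔
      ∃ U, MI N U ∧ IsStep N U X X' ∧ setSrc N U = α ∧ setTgt N U = β := by
  simp only [Fires, IsStep, and_assoc]

theorem isStep_comp_iff {M : NetB l m} {N : NetB m n} {W : Set (comp M N).T}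
    {X X' : Set M.P} {Y Y' : Set N.P} :
    IsStep (comp M N) W (Sum.inl '' X ∪ Sum.inr '' Y) (Sum.inl '' X' ∪ Sum.inr '' Y') ↔
      IsStep M (compLeft W) X X' ∧ IsStep N (compRight W) Y Y' := by
  unfold IsStep
  rw [setPre_comp, setPost_comp]
  refine (and_congr inl_image_union_inr_image_subset_iff <| and_congr
    inl_image_union_inr_image_inter_eq_empty_iff <|
      (Eq.congr_right (inl_image_union_inr_image_sdiff_union _ _)).trans
        inl_image_union_inr_image_inj).trans ?_
  tauto

/-- Compositionality of `;` w.r.t. step firing semantics: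
`(X+Y) →⟨α,β⟩ (X′+Y′)` in `⟦M ; N⟧` iff there is `γ ⊆ [m]` with
`X →⟨α,γ⟩ X′` in `⟦M⟧` and `Y →⟨γ,β⟩ Y′` in `⟦N⟧`. -/
theorem comp_fires {l m n : ℕ} (M : NetB l m) (N : NetB m n)
    (hM : IsContention M) (hN : IsContention N)
    (X X' : Set M.P) (Y Y' : Set N.P) (α : Set (Fin l)) (β : Set (Fin n)) :
    Fires (comp M N) (Sum.inl '' X ∪ Sum.inr '' Y) (Sum.inl '' X' ∪ Sum.inr '' Y') α β ↔
      ∃ γ : Set (Fin m), Fires M X X' α γ ∧ Fires N Y Y' γ β := by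
  simp only [fires_iff]
  constructor
  · rintro ⟨W, hW, hstep, rfl, rfl⟩
    obtain ⟨hstepM, hstepN⟩ := isStep_comp_iff.mp hstep
    exact ⟨_, ⟨_, hW.compLeft, hstepM, (setSrc_comp W).symm, rfl⟩,
      ⟨_, hW.compRight, hstepN, (setTgt_compLeft W).symm, (setTgt_comp W).symm⟩⟩
  · rintro ⟨γ, ⟨U, hU, hstepM, rfl, rfl⟩, ⟨V, hV, hstepN, hUV, rfl⟩⟩
    let s : Sync M N := ⟨U, V, hU, hV, hUV.symm⟩
    refine ⟨s.minimalsBelow, s.mi_comp_minimalsBelow hM hN, ?_, ?_, ?_⟩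
    · rw [isStep_comp_iff, s.compLeft_minimalsBelow hM hN, s.compRight_minimalsBelow hM hN]
      exact ⟨hstepM, hstepN⟩
    · rw [setSrc_comp, s.compLeft_minimalsBelow hM hN]
    · rw [setTgt_comp, s.compRight_minimalsBelow hM hN]

end NWB
end

section
/- Compositionality of '⊗' with respect to the step firing semantics: for nets with boundaries M : l → m and N : k → n and markings X, X′ ⊆ P_M, Y, Y′ ⊆ P_N, there is a transition (X+Y) →⟨α,β⟩ (X′+Y′) in the labelled transition system ⟦M ⊗ N⟧ (with α ⊆ [l+k], β ⊆ [m+n]) if and only if X →⟨α ∩ [l], β ∩ [m]⟩ X′ in ⟦M⟧ and Y →⟨{i | l+i ∈ α}, {j | m+j ∈ β}⟩ Y′ in ⟦N⟧. -/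
/-! A set of transitions of `M ⊗ N` is a pair of sets of transitions of `M` and of `N`, it is
mutually independent iff both halves are (there is no contention across), and its pre-set,
post-set and boundary labels are the disjoint unions of those of the two halves. Pulling every
clause of the firing rule back along the two injections `Sum.inl`, `Sum.inr` (on places) and
`Fin.castAdd`, `Fin.natAdd` (on ports) therefore splits it into the rule for `M` and the rule
for `N`, and the witnessing set of transitions is reassembled from the two halves. -/

namespace Set

variable {α β : Type*}

theorem exists_sum_iff {p : Set α → Prop} {q : Set β → Prop} :
    (∃ u : Set (α ⊕ β), p (Sum.inl ⁻¹' u) ∧ q (Sum.inr ⁻¹' u)) ↔ (∃ u, p u) ∧ ∃ v, q v :=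
  ⟨fun ⟨_, hp, hq⟩ => ⟨⟨_, hp⟩, _, hq⟩, fun ⟨⟨u, hp⟩, v, hq⟩ =>
    ⟨Sum.inl '' u ∪ Sum.inr '' v, by
      simpa [Sum.inl_injective.preimage_image, Sum.inr_injective.preimage_image] using ⟨hp, hq⟩⟩⟩

theorem sum_subset_iff {s t : Set (α ⊕ β)} :
    s ⊆ t ↔ Sum.inl ⁻¹' s ⊆ Sum.inl ⁻¹' t ∧ Sum.inr ⁻¹' s ⊆ Sum.inr ⁻¹' t :=
  sumEquiv.le_iff_le.symm

theorem sum_ext_iff {s t : Set (α ⊕ β)} :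
    s = t ↔ Sum.inl ⁻¹' s = Sum.inl ⁻¹' t ∧ Sum.inr ⁻¹' s = Sum.inr ⁻¹' t :=
  sumEquiv.injective.eq_iff.symm.trans Prod.ext_iff

variable {ι κ γ δ ε : Type*} {e₁ : γ → ε} {e₂ : δ → ε}

theorem preimage_biUnion_sum_left {F : ι ⊕ κ → Set ε} {f : ι → Set γ} {g : κ → Set δ}
    (he₁ : e₁.Injective) (hdisj : ∀ a b, e₁ a ≠ e₂ b)
    (hl : ∀ i, F (.inl i) = e₁ '' f i) (hr : ∀ j, F (.inr j) = e₂ '' g j) (U : Set (ι ⊕ κ)) :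
    e₁ ⁻¹' ⋃ u ∈ U, F u = ⋃ i ∈ Sum.inl ⁻¹' U, f i := by
  ext x; simp [Sum.exists, hl, hr, he₁.eq_iff, (hdisj _ _).symm]

theorem preimage_biUnion_sum_right {F : ι ⊕ κ → Set ε} {f : ι → Set γ} {g : κ → Set δ}
    (he₂ : e₂.Injective) (hdisj : ∀ a b, e₁ a ≠ e₂ b)
    (hl : ∀ i, F (.inl i) = e₁ '' f i) (hr : ∀ j, F (.inr j) = e₂ '' g j) (U : Set (ι ⊕ κ)) :
    e₂ ⁻¹' ⋃ u ∈ U, F u = ⋃ j ∈ Sum.inr ⁻¹' U, g j := by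
  ext x; simp [Sum.exists, hl, hr, he₂.eq_iff, hdisj]

theorem finAdd_ext_iff {l k : ℕ} {s t : Set (Fin (l + k))} :
    s = t ↔ Fin.castAdd k ⁻¹' s = Fin.castAdd k ⁻¹' t ∧ Fin.natAdd l ⁻¹' s = Fin.natAdd l ⁻¹' t :=
  ⟨by rintro rfl; exact ⟨rfl, rfl⟩,
    fun ⟨hl, hr⟩ => Set.ext (Fin.addCases (Set.ext_iff.mp hl) (Set.ext_iff.mp hr))⟩

end Set

theorem Fin.castAdd_ne_natAdd {l k : ℕ} (i : Fin l) (j : Fin k) :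
    Fin.castAdd k i ≠ Fin.natAdd l j := by
  simp only [ne_eq, Fin.ext_iff, Fin.val_castAdd, Fin.val_natAdd]; omega

namespace NWB

def MarkingStep {P : Type*} (pre post X X' : Set P) : Prop :=
  pre ⊆ X ∧ post ∩ X = ∅ ∧ X' = X \ pre ∪ post

theorem markingStep_sum_iff {α β : Type*} {pre post : Set (α ⊕ β)} {X X' : Set α} {Y Y' : Set β} :
    MarkingStep pre post (Sum.inl '' X ∪ Sum.inr '' Y) (Sum.inl '' X' ∪ Sum.inr '' Y') ↔
      MarkingStep (Sum.inl ⁻¹' pre) (Sum.inl ⁻¹' post) X X' ∧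
        MarkingStep (Sum.inr ⁻¹' pre) (Sum.inr ⁻¹' post) Y Y' := by
  simp only [MarkingStep, Set.sum_subset_iff, Set.sum_ext_iff, Set.preimage_inter, Set.preimage_union,
    Set.preimage_sdiff, Set.preimage_empty, Set.preimage_inl_image_inr, Set.preimage_inr_image_inl,
    Sum.inl_injective.preimage_image, Sum.inr_injective.preimage_image, Set.union_empty,
    Set.empty_union]
  tauto

variable {l m k n : ℕ} {M : NetB l m} {N : NetB k n}

theorem preimage_inl_setPre_tensor (U : Set (tensor M N).T) :
    Sum.inl ⁻¹' setPre (tensor M N) U = setPre M (Sum.inl ⁻¹' U) :=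
  Set.preimage_biUnion_sum_left Sum.inl_injective (fun _ _ => Sum.inl_ne_inr)
    (fun _ => rfl) (fun _ => rfl) U

theorem preimage_inr_setPre_tensor (U : Set (tensor M N).T) :
    Sum.inr ⁻¹' setPre (tensor M N) U = setPre N (Sum.inr ⁻¹' U) :=
  Set.preimage_biUnion_sum_right Sum.inr_injective (fun _ _ => Sum.inl_ne_inr)
    (fun _ => rfl) (fun _ => rfl) U

theorem preimage_inl_setPost_tensor (U : Set (tensor M N).T) :
    Sum.inl ⁻¹' setPost (tensor M N) U = setPost M (Sum.inl ⁻¹' U) :=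
  Set.preimage_biUnion_sum_left Sum.inl_injective (fun _ _ => Sum.inl_ne_inr)
    (fun _ => rfl) (fun _ => rfl) U

theorem preimage_inr_setPost_tensor (U : Set (tensor M N).T) :
    Sum.inr ⁻¹' setPost (tensor M N) U = setPost N (Sum.inr ⁻¹' U) :=
  Set.preimage_biUnion_sum_right Sum.inr_injective (fun _ _ => Sum.inl_ne_inr)
    (fun _ => rfl) (fun _ => rfl) U

theorem preimage_castAdd_setSrc_tensor (U : Set (tensor M N).T) :
    Fin.castAdd k ⁻¹' setSrc (tensor M N) U = setSrc M (Sum.inl ⁻¹' U) :=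
  Set.preimage_biUnion_sum_left (Fin.castAdd_injective l k) Fin.castAdd_ne_natAdd
    (fun _ => rfl) (fun _ => rfl) U

theorem preimage_natAdd_setSrc_tensor (U : Set (tensor M N).T) :
    Fin.natAdd l ⁻¹' setSrc (tensor M N) U = setSrc N (Sum.inr ⁻¹' U) :=
  Set.preimage_biUnion_sum_right (Fin.natAdd_injective k l) Fin.castAdd_ne_natAdd
    (fun _ => rfl) (fun _ => rfl) U

theorem preimage_castAdd_setTgt_tensor (U : Set (tensor M N).T) :
    Fin.castAdd n ⁻¹' setTgt (tensor M N) U = setTgt M (Sum.inl ⁻¹' U) :=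
  Set.preimage_biUnion_sum_left (Fin.castAdd_injective m n) Fin.castAdd_ne_natAdd
    (fun _ => rfl) (fun _ => rfl) U

theorem preimage_natAdd_setTgt_tensor (U : Set (tensor M N).T) :
    Fin.natAdd m ⁻¹' setTgt (tensor M N) U = setTgt N (Sum.inr ⁻¹' U) :=
  Set.preimage_biUnion_sum_right (Fin.natAdd_injective n m) Fin.castAdd_ne_natAdd
    (fun _ => rfl) (fun _ => rfl) U

theorem mi_tensor_iff (U : Set (tensor M N).T) :
    MI (tensor M N) U ↔ MI M (Sum.inl ⁻¹' U) ∧ MI N (Sum.inr ⁻¹' U) := by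
  refine ⟨fun h => ⟨fun u hu v hv huv => Sum.inl_injective (h _ hu _ hv huv),
    fun u hu v hv huv => Sum.inr_injective (h _ hu _ hv huv)⟩, ?_⟩
  rintro ⟨hM, hN⟩ (u | u) hu (v | v) hv huv
  exacts [congrArg Sum.inl (hM u hu v hv huv), huv.elim, huv.elim,
    congrArg Sum.inr (hN u hu v hv huv)]

theorem markingStep_tensor_iff (U : Set (tensor M N).T) (X X' : Set M.P) (Y Y' : Set N.P) :
    MarkingStep (setPre (tensor M N) U) (setPost (tensor M N) U)
        (Sum.inl '' X ∪ Sum.inr '' Y) (Sum.inl '' X' ∪ Sum.inr '' Y') ↔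
      MarkingStep (setPre M (Sum.inl ⁻¹' U)) (setPost M (Sum.inl ⁻¹' U)) X X' ∧
        MarkingStep (setPre N (Sum.inr ⁻¹' U)) (setPost N (Sum.inr ⁻¹' U)) Y Y' := by
  rw [← preimage_inl_setPre_tensor, ← preimage_inl_setPost_tensor, ← preimage_inr_setPre_tensor,
    ← preimage_inr_setPost_tensor]
  -- `(tensor M N).P` is `M.P ⊕ N.P` only after unfolding `tensor`, so the lemma is not found by `rw`.
  exact markingStep_sum_iff

def FiresBy {k l : ℕ} (N : NetB k l) (U : Set N.T) (X X' : Set N.P) (α : Set (Fin k))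
    (β : Set (Fin l)) : Prop :=
  MI N U ∧ MarkingStep (setPre N U) (setPost N U) X X' ∧ setSrc N U = α ∧ setTgt N U = β

theorem fires_iff_exists_firesBy {k l : ℕ} {N : NetB k l} {X X' : Set N.P} {α : Set (Fin k)}
    {β : Set (Fin l)} : Fires N X X' α β ↔ ∃ U, FiresBy N U X X' α β := by
  simp only [Fires, FiresBy, MarkingStep, and_assoc]

theorem firesBy_tensor_iff (U : Set (tensor M N).T) (X X' : Set M.P) (Y Y' : Set N.P)
    (α : Set (Fin (l + k))) (β : Set (Fin (m + n))) :
    FiresBy (tensor M N) U (Sum.inl '' X ∪ Sum.inr '' Y) (Sum.inl '' X' ∪ Sum.inr '' Y') α β ↔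
      FiresBy M (Sum.inl ⁻¹' U) X X' (Fin.castAdd k ⁻¹' α) (Fin.castAdd n ⁻¹' β) ∧
        FiresBy N (Sum.inr ⁻¹' U) Y Y' (Fin.natAdd l ⁻¹' α) (Fin.natAdd m ⁻¹' β) := by
  rw [FiresBy, FiresBy, FiresBy, mi_tensor_iff, markingStep_tensor_iff, Set.finAdd_ext_iff, Set.finAdd_ext_iff,
    preimage_castAdd_setSrc_tensor,
    preimage_natAdd_setSrc_tensor, preimage_castAdd_setTgt_tensor, preimage_natAdd_setTgt_tensor]
  tauto

theorem tensor_fires_general {l m k n : ℕ} (M : NetB l m) (N : NetB k n)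
    (X X' : Set M.P) (Y Y' : Set N.P)
    (α : Set (Fin (l + k))) (β : Set (Fin (m + n))) :
    Fires (tensor M N) (Sum.inl '' X ∪ Sum.inr '' Y) (Sum.inl '' X' ∪ Sum.inr '' Y') α β ↔
      (Fires M X X' {i | Fin.castAdd k i ∈ α} {j | Fin.castAdd n j ∈ β} ∧
       Fires N Y Y' {i | Fin.natAdd l i ∈ α} {j | Fin.natAdd m j ∈ β}) := by
  simp only [fires_iff_exists_firesBy]
  exact (exists_congr fun U => firesBy_tensor_iff U X X' Y Y' α β).trans
    (Set.exists_sum_iff (p := fun U => FiresBy M U X X' _ _) (q := fun V => FiresBy N V Y Y' _ _))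

/-- Compositionality of `⊗` w.r.t. step firing semantics:
`(X+Y) →⟨α,β⟩ (X′+Y′)` in `⟦M ⊗ N⟧` iff
`X →⟨α ∩ [l], β ∩ [m]⟩ X′` in `⟦M⟧` and
`Y →⟨{i | l+i ∈ α}, {j | m+j ∈ β}⟩ Y′` in `⟦N⟧`. -/
theorem tensor_fires {l m k n : ℕ} (M : NetB l m) (N : NetB k n)
    (hM : IsContention M) (hN : IsContention N)
    (X X' : Set M.P) (Y Y' : Set N.P)
    (α : Set (Fin (l + k))) (β : Set (Fin (m + n))) :
    Fires (tensor M N) (Sum.inl '' X ∪ Sum.inr '' Y) (Sum.inl '' X' ∪ Sum.inr '' Y') α β ↔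
      (Fires M X X' {i | Fin.castAdd k i ∈ α} {j | Fin.castAdd n j ∈ β} ∧
       Fires N Y Y' {i | Fin.natAdd l i ∈ α} {j | Fin.natAdd m j ∈ β}) :=
  tensor_fires_general M N X X' Y Y' α β

end NWB
end

section
/- For every n ≥ 2 and every oriented partition (P_l, P_r) of the places of the clique net C_n, the networks between the two parts have exactly two elements: |net(P_l → P_r)| = |net(P_r → P_l)| = 2. -/
/-! The connection of a place port of `C_n` consists of the singletons of the opposite ports of
all other places, so seen from a port of one part of a partition it is the family of singletons
of the in-ports, or of the out-ports, of the other part. Hence each network has exactly these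
two elements, and they differ because an in-port is never an out-port. -/

namespace NWB

section Ports

variable {k l : ℕ} {N : NetB k l}

lemma portIn_injective : Function.Injective (portIn (N := N)) := fun _ _ h =>
  Sum.inl_injective (Sum.inl_injective h)

lemma portOut_injective : Function.Injective (portOut (N := N)) := fun _ _ h =>
  Sum.inr_injective (Sum.inl_injective h)

@[simp]
lemma portIn_ne_portOut (p q : N.P) : portIn p ≠ portOut q :=
  fun h => Sum.inl_ne_inr (Sum.inl_injective h)

@[simp]
lemma portOut_ne_portIn (p q : N.P) : portOut p ≠ portIn q :=
  (portIn_ne_portOut q p).symm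

/-- The paper's `ports(S)`. -/
def placePorts (S : Set N.P) : Set (Port N) := portIn '' S ∪ portOut '' S

@[simp]
lemma portIn_mem_placePorts {p : N.P} {S : Set N.P} : portIn p ∈ placePorts S ↔ p ∈ S := by
  simp [placePorts, portIn_injective.eq_iff]

@[simp]
lemma portOut_mem_placePorts {p : N.P} {S : Set N.P} : portOut p ∈ placePorts S ↔ p ∈ S := by
  simp [placePorts, portOut_injective.eq_iff]

lemma eportsL_eq_placePorts (N : NetB 0 l) (S : Set N.P) : eportsL N S = placePorts S := by
  simp [eportsL, placePorts, Set.range_eq_empty]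

lemma eportsR_eq_placePorts (N : NetB k 0) (S : Set N.P) : eportsR N S = placePorts S := by
  simp [eportsR, placePorts, Set.range_eq_empty]

lemma networkLR_eq_image (N : NetB k l) (Pl Pr : Set N.P) :
    networkLR N Pl Pr = connR N (eportsR N Pr) '' eportsL N Pl := by
  ext c
  simp [networkLR, eq_comm]

lemma networkRL_eq_image (N : NetB k l) (Pl Pr : Set N.P) :
    networkRL N Pl Pr = connR N (eportsL N Pl) '' eportsR N Pr := by
  ext c
  simp [networkRL, eq_comm]

lemma tports_eq_pair {t : N.T} {a b : N.P} (hpre : N.pre t = {a}) (hpost : N.post t = {b})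
    (hsrc : N.src t = ∅) (htgt : N.tgt t = ∅) : tports N t = {portOut a, portIn b} := by
  simp [tports, hpre, hpost, hsrc, htgt, Set.pair_comm]

lemma conn_portOut_of_tports_eq_pair {s d : N.T → N.P}
    (h : ∀ t, tports N t = {portOut (s t), portIn (d t)}) (p : N.P) :
    conn N (portOut p) = (fun t => {portIn (d t)}) '' {t | s t = p} := by
  ext K
  constructor
  · rintro ⟨t, hsub, rfl⟩
    rw [h] at hsub ⊢
    have hp : s t = p := by simpa [portOut_injective.eq_iff, eq_comm] using hsub.subset rfl
    exact ⟨t, hp, by rw [hp, Set.pair_sdiff_left (portOut_ne_portIn _ _)]⟩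
  · rintro ⟨t, rfl, rfl⟩
    refine ⟨t, ?_, ?_⟩ <;> rw [h]
    · exact Set.pair_comm _ _ ▸ Set.ssubset_insert (by simp)
    · exact (Set.pair_sdiff_left (portOut_ne_portIn _ _)).symm

lemma conn_portIn_of_tports_eq_pair {s d : N.T → N.P}
    (h : ∀ t, tports N t = {portOut (s t), portIn (d t)}) (p : N.P) :
    conn N (portIn p) = (fun t => {portOut (s t)}) '' {t | d t = p} := by
  ext K
  constructor
  · rintro ⟨t, hsub, rfl⟩
    rw [h] at hsub ⊢
    have hp : d t = p := by simpa [portIn_injective.eq_iff, eq_comm] using hsub.subset rfl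
    exact ⟨t, hp, by rw [hp, Set.pair_sdiff_right (portOut_ne_portIn _ _)]⟩
  · rintro ⟨t, rfl, rfl⟩
    refine ⟨t, ?_, ?_⟩ <;> rw [h]
    · exact Set.ssubset_insert (by simp)
    · exact (Set.pair_sdiff_right (portOut_ne_portIn _ _)).symm

lemma connR_eq_image_of_conn_eq_image {α : Type*} {q : Port N} {g : α → Port N} {S : Set α}
    (R : Set (Port N)) (h : conn N q = (fun a => {g a}) '' S) :
    connR N R q = (fun a => {g a}) '' (S ∩ g ⁻¹' R) := by
  ext K
  simp only [connR, h, Set.mem_image, Set.mem_ofPred_eq, Set.mem_inter_iff, Set.mem_preimage]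
  constructor
  · rintro ⟨_, ⟨a, ha, rfl⟩, hR, rfl⟩
    have hgR : g a ∈ R := Set.singleton_inter_nonempty.mp hR
    exact ⟨a, ⟨ha, hgR⟩, (Set.singleton_inter_of_mem hgR).symm⟩
  · rintro ⟨a, ⟨ha, hgR⟩, rfl⟩
    exact ⟨_, ⟨a, ha, rfl⟩, Set.singleton_inter_nonempty.mpr hgR,
      (Set.singleton_inter_of_mem hgR).symm⟩

lemma image_singleton_portOut_ne_image_singleton_portIn {B : Set N.P} (hB : B.Nonempty) :
    (fun p => ({portOut p} : Set (Port N))) '' B ≠ (fun p => {portIn p}) '' B := by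
  obtain ⟨p, hp⟩ := hB
  intro h
  obtain ⟨q, -, hq⟩ : {portIn p} ∈ (fun p => ({portOut p} : Set (Port N))) '' B := by
    rw [h]
    exact ⟨p, hp, rfl⟩
  exact portOut_ne_portIn q p (Set.singleton_eq_singleton_iff.mp hq)

end Ports

section Clique

variable {n : ℕ}

lemma clique_tports (t : (clique n).T) :
    tports (clique n) t = {portOut t.1.1, portIn t.1.2} :=
  tports_eq_pair rfl rfl rfl rfl

lemma clique_connR_portOut {B : Set (clique n).P} {i : (clique n).P} (hi : i ∉ B) :
    connR (clique n) (placePorts B) (portOut i) = (fun j => {portIn j}) '' B := by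
  rw [connR_eq_image_of_conn_eq_image _ (conn_portOut_of_tports_eq_pair clique_tports i)]
  ext K
  constructor
  · rintro ⟨t, ⟨-, hB⟩, rfl⟩
    exact ⟨t.1.2, portIn_mem_placePorts.mp hB, rfl⟩
  · rintro ⟨j, hj, rfl⟩
    exact ⟨⟨(i, j), (ne_of_mem_of_not_mem hj hi).symm⟩,
      ⟨rfl, portIn_mem_placePorts.mpr hj⟩, rfl⟩

lemma clique_connR_portIn {B : Set (clique n).P} {i : (clique n).P} (hi : i ∉ B) :
    connR (clique n) (placePorts B) (portIn i) = (fun j => {portOut j}) '' B := by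
  rw [connR_eq_image_of_conn_eq_image _ (conn_portIn_of_tports_eq_pair clique_tports i)]
  ext K
  constructor
  · rintro ⟨t, ⟨-, hB⟩, rfl⟩
    exact ⟨t.1.1, portOut_mem_placePorts.mp hB, rfl⟩
  · rintro ⟨j, hj, rfl⟩
    exact ⟨⟨(j, i), ne_of_mem_of_not_mem hj hi⟩,
      ⟨rfl, portOut_mem_placePorts.mpr hj⟩, rfl⟩

lemma clique_connR_image_placePorts {A B : Set (clique n).P} (hA : A.Nonempty)
    (hAB : Disjoint A B) :
    connR (clique n) (placePorts B) '' placePorts A =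
      {(fun j => {portOut j}) '' B, (fun j => {portIn j}) '' B} := by
  have hB : ∀ i ∈ A, i ∉ B := fun _ hi => Set.disjoint_left.mp hAB hi
  rw [show placePorts A = portIn '' A ∪ portOut '' A from rfl, Set.image_union,
    Set.image_image, Set.image_image,
    Set.image_congr fun i hi => clique_connR_portIn (hB i hi),
    Set.image_congr fun i hi => clique_connR_portOut (hB i hi),
    hA.image_const, hA.image_const, Set.insert_eq]

end Clique

theorem clique_network_ncard_general (n : ℕ) (Pl Pr : Set (clique n).P)
    (hPl : Pl.Nonempty) (hPr : Pr.Nonempty) (hdisj : Pl ∩ Pr = ∅) :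
    (networkLR (clique n) Pl Pr).ncard = 2 ∧
    (networkRL (clique n) Pl Pr).ncard = 2 := by
  have hd : Disjoint Pl Pr := Set.disjoint_iff_inter_eq_empty.mpr hdisj
  rw [networkLR_eq_image, networkRL_eq_image, eportsL_eq_placePorts, eportsR_eq_placePorts,
    clique_connR_image_placePorts hPl hd, clique_connR_image_placePorts hPr hd.symm]
  exact ⟨Set.ncard_pair (image_singleton_portOut_ne_image_singleton_portIn hPr),
    Set.ncard_pair (image_singleton_portOut_ne_image_singleton_portIn hPl)⟩

/-- for every `n ≥ 2` and every oriented partition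
`(P_l, P_r)` of the places of the clique net `C_n`, the networks between the
two parts have exactly two elements. -/
theorem clique_network_ncard (n : ℕ) (hn : 2 ≤ n) (Pl Pr : Set (clique n).P)
    (hPl : Pl.Nonempty) (hPr : Pr.Nonempty) (hdisj : Pl ∩ Pr = ∅)
    (hunion : Pl ∪ Pr = Set.univ) :
    (networkLR (clique n) Pl Pr).ncard = 2 ∧
    (networkRL (clique n) Pl Pr).ncard = 2 :=
  clique_network_ncard_general n Pl Pr hPl hPr hdisj

end NWB
end

section
/- For every n ≥ 2, the subset net P_n has decomposition width 1, i.e. there exists a wiring decomposition of P_n of width 1. -/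
/-! `P_n` is the wiring `S ; B ; ⋯ ; B ; E` of a source net `S : 0 → 1` holding the place `S`,
`n` copies of the one-place choice cell `B : 1 → 1`, and the empty sink `E : 1 → 0`. Every
transition of these leaves fires the boundary port it shares with its neighbours, so a minimal
synchronisation across such a port is a single pair of transitions, one on each side. Hence the
transitions of `B ; ⋯ ; B ; E` are the ways of choosing, in each cell, whether to mark its place,
i.e. the subsets of the `n` cell places, and `S` in front consumes `S` in each of them. -/

namespace NWB

theorem castNet_rfl {k l : ℕ} (N : NetB k l) : castNet rfl rfl N = N := by
  cases N
  simp [castNet]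

theorem seqS_mk {l m n : ℕ} (M : NetB l m) (N : NetB m n) :
    seqS ⟨l, m, M⟩ ⟨m, n, N⟩ = ⟨l, n, comp M N⟩ :=
  (dif_pos rfl).trans (by rw [castNet_rfl])

theorem setPre_singleton {k l : ℕ} (N : NetB k l) (t : N.T) : setPre N {t} = N.pre t := by
  simp [setPre]

theorem setPost_singleton {k l : ℕ} (N : NetB k l) (t : N.T) : setPost N {t} = N.post t := by
  simp [setPost]

theorem setSrc_singleton {k l : ℕ} (N : NetB k l) (t : N.T) : setSrc N {t} = N.src t := by
  simp [setSrc]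

theorem setTgt_singleton {k l : ℕ} (N : NetB k l) (t : N.T) : setTgt N {t} = N.tgt t := by
  simp [setTgt]

theorem setCon_singleton {k l : ℕ} (N : NetB k l) (t u : N.T) :
    setCon N {t} {u} ↔ N.con t u := by
  simp [setCon]

section SingleWire

variable {a b : ℕ} {M : NetB a 1} {N : NetB 1 b}

theorem setTgt_eq_empty_iff (hM : ∀ t, M.tgt t = Set.univ) {U : Set M.T} :
    setTgt M U = ∅ ↔ U = ∅ := by
  simp [setTgt, hM, Set.eq_empty_iff_forall_notMem]

theorem setSrc_eq_empty_iff (hN : ∀ t, N.src t = Set.univ) {V : Set N.T} :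
    setSrc N V = ∅ ↔ V = ∅ := by
  simp [setSrc, hN, Set.eq_empty_iff_forall_notMem]

theorem Sync.U_eq_empty_iff (hM : ∀ t, M.tgt t = Set.univ) (hN : ∀ t, N.src t = Set.univ)
    (s : Sync M N) : s.U = ∅ ↔ s.V = ∅ := by
  rw [← setTgt_eq_empty_iff hM, s.bd, setSrc_eq_empty_iff hN]

variable (hM : ∀ t, M.tgt t = Set.univ) (hN : ∀ t, N.src t = Set.univ)

def Sync.single (u : M.T) (v : N.T) : Sync M N where
  U := {u}
  V := {v}
  miU := by simp [MI]
  miV := by simp [MI]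
  bd := by rw [setTgt_singleton, setSrc_singleton, hM, hN]

theorem Sync.single_minimal (u : M.T) (v : N.T) : (Sync.single hM hN u v).Minimal := by
  refine ⟨fun h => Set.singleton_ne_empty u h.1, fun s hU hV => ?_⟩
  have hUV := Sync.U_eq_empty_iff hM hN s
  rcases Set.subset_singleton_iff_eq.mp hU with hU | hU <;>
    rcases Set.subset_singleton_iff_eq.mp hV with hV | hV
  · exact Or.inl ⟨hU, hV⟩
  · exact absurd (hUV.mp hU) (hV ▸ Set.singleton_ne_empty v)
  · exact absurd (hUV.mpr hV) (hU ▸ Set.singleton_ne_empty u)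
  · exact Or.inr ⟨hU, hV⟩

theorem Sync.Minimal.eq_single {s : Sync M N} (hs : s.Minimal) :
    ∃ u v, s = Sync.single hM hN u v := by
  obtain ⟨u, hu⟩ : s.U.Nonempty := Set.nonempty_iff_ne_empty.mpr fun h =>
    hs.1 ⟨h, (Sync.U_eq_empty_iff hM hN s).mp h⟩
  obtain ⟨v, hv⟩ : s.V.Nonempty := Set.nonempty_iff_ne_empty.mpr fun h =>
    hs.1 ⟨(Sync.U_eq_empty_iff hM hN s).mpr h, h⟩
  refine ⟨u, v, ?_⟩
  rcases hs.2 (Sync.single hM hN u v) (Set.singleton_subset_iff.mpr hu)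
    (Set.singleton_subset_iff.mpr hv) with h | ⟨hU, hV⟩
  · exact absurd h.1 (Set.singleton_ne_empty u)
  · cases s
    simp_all [Sync.single]

noncomputable def compTransEquiv : M.T × N.T ≃ (comp M N).T :=
  Equiv.ofBijective (fun p => ⟨Sync.single hM hN p.1 p.2, Sync.single_minimal hM hN p.1 p.2⟩)
    ⟨fun p q h => by
      have hU : ({p.1} : Set M.T) = {q.1} := congrArg (fun s => s.1.U) h
      have hV : ({p.2} : Set N.T) = {q.2} := congrArg (fun s => s.1.V) h
      exact Prod.ext (Set.singleton_eq_singleton_iff.mp hU) (Set.singleton_eq_singleton_iff.mp hV),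
     fun ⟨s, hs⟩ => by
      obtain ⟨u, v, rfl⟩ := Sync.Minimal.eq_single hM hN hs
      exact ⟨(u, v), rfl⟩⟩

variable (u : M.T) (v : N.T)

@[simp]
theorem comp_pre_compTransEquiv :
    (comp M N).pre (compTransEquiv hM hN (u, v)) =
      (Sum.inl '' M.pre u ∪ Sum.inr '' N.pre v : Set (M.P ⊕ N.P)) := by
  show Sum.inl '' setPre M {u} ∪ Sum.inr '' setPre N {v} = _
  rw [setPre_singleton, setPre_singleton]

@[simp]
theorem comp_post_compTransEquiv :
    (comp M N).post (compTransEquiv hM hN (u, v)) =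
      (Sum.inl '' M.post u ∪ Sum.inr '' N.post v : Set (M.P ⊕ N.P)) := by
  show Sum.inl '' setPost M {u} ∪ Sum.inr '' setPost N {v} = _
  rw [setPost_singleton, setPost_singleton]

@[simp]
theorem comp_src_compTransEquiv : (comp M N).src (compTransEquiv hM hN (u, v)) = M.src u :=
  setSrc_singleton M u

@[simp]
theorem comp_tgt_compTransEquiv : (comp M N).tgt (compTransEquiv hM hN (u, v)) = N.tgt v :=
  setTgt_singleton N v

@[simp]
theorem comp_con_compTransEquiv (u' : M.T) (v' : N.T) :
    (comp M N).con (compTransEquiv hM hN (u, v)) (compTransEquiv hM hN (u', v')) ↔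
      M.con u u' ∨ N.con v v' :=
  or_congr (setCon_singleton M u u') (setCon_singleton N v v')

end SingleWire

structure IsChoiceNet {k l : ℕ} (N : NetB k l) : Prop where
  pre_eq_empty : ∀ t, N.pre t = ∅
  src_eq_univ : ∀ t, N.src t = Set.univ
  tgt_eq_univ : ∀ t, N.tgt t = Set.univ
  con_all : ∀ t u, N.con t u
  post_bijective : Function.Bijective N.post

def choiceNet (k l : ℕ) (α : Type) [Finite α] : NetB k l where
  P := α
  T := Set α
  finP := ‹_›
  finT := inferInstance
  pre _ := ∅
  post A := A
  src _ := Set.univ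
  tgt _ := Set.univ
  con _ _ := True

theorem isChoiceNet_choiceNet (k l : ℕ) (α : Type) [Finite α] :
    IsChoiceNet (choiceNet k l α) :=
  ⟨fun _ => rfl, fun _ => rfl, fun _ => rfl, fun _ _ => trivial, Function.bijective_id⟩

theorem IsChoiceNet.comp {a b : ℕ} {M : NetB a 1} {N : NetB 1 b}
    (hM : IsChoiceNet M) (hN : IsChoiceNet N) : IsChoiceNet (NWB.comp M N) := by
  set e := compTransEquiv hM.tgt_eq_univ hN.src_eq_univ
  have hpost : (NWB.comp M N).post =
      Set.sumEquiv.symm ∘ Prod.map M.post N.post ∘ e.symm := by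
    funext t
    obtain ⟨⟨u, v⟩, rfl⟩ := e.surjective t
    simp only [e, Function.comp_apply, Equiv.symm_apply_apply, Prod.map_apply,
      Set.sumEquiv_symm_apply]
    exact comp_post_compTransEquiv _ _ u v
  refine ⟨e.forall_congr_right.mp fun ⟨u, v⟩ => ?_,
    e.forall_congr_right.mp fun ⟨u, v⟩ => ?_, e.forall_congr_right.mp fun ⟨u, v⟩ => ?_,
    e.forall_congr_right.mp fun ⟨u, v⟩ => e.forall_congr_right.mp fun ⟨u', v'⟩ => ?_, ?_⟩
  · simp [e, hM.pre_eq_empty, hN.pre_eq_empty]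
    -- the two sides are `∅` in `Set (M.P ⊕ N.P)` and in the defeq `Set (comp M N).P`
    rfl
  · simp [e, hM.src_eq_univ]
  · simp [e, hN.tgt_eq_univ]
  · simp [e, hM.con_all]
  · rw [hpost]
    exact Set.sumEquiv.symm.bijective.comp
      ((hM.post_bijective.prodMap hN.post_bijective).comp e.symm.bijective)

def sourceNet : NetB 0 1 where
  P := Unit
  T := Unit
  finP := inferInstance
  finT := inferInstance
  pre _ := Set.univ
  post _ := ∅
  src _ := ∅
  tgt _ := Set.univ
  con _ _ := True

theorem sourceNet_tgt (t : sourceNet.T) : sourceNet.tgt t = Set.univ := rfl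

noncomputable def sourceCompIsoSubsetNet {n : ℕ} {N : NetB 1 0} (hN : IsChoiceNet N)
    (σ : N.P ≃ Fin n) :
    NetIso (comp sourceNet N) (subsetNet n) :=
  let e := compTransEquiv sourceNet_tgt hN.src_eq_univ
  let ep : Unit ⊕ N.P ≃ Option (Fin n) := (Equiv.sumCongr (Equiv.refl Unit) σ).trans
    ((Equiv.sumComm _ _).trans (Equiv.optionEquivSumPUnit (Fin n)).symm)
  let f : Unit × N.T ≃ Set (Fin n) :=
    (Equiv.punitProd N.T).trans <|
      (Equiv.ofBijective _ hN.post_bijective).trans (Equiv.Set.congr σ)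
  { ep := ep
    et := e.symm.trans f
    pre_eq := e.forall_congr_right.mp fun ⟨u, v⟩ => by
      rw [comp_pre_compTransEquiv, hN.pre_eq_empty]
      show {none} = ep '' (Sum.inl '' Set.univ ∪ Sum.inr '' ∅)
      ext (_ | i) <;> simp [ep]
    post_eq := e.forall_congr_right.mp fun ⟨u, v⟩ => by
      rw [comp_post_compTransEquiv]
      show some '' f (e.symm (e (u, v))) = ep '' (Sum.inl '' ∅ ∪ Sum.inr '' N.post v)
      rw [Equiv.symm_apply_apply]
      show some '' (σ '' N.post v) = _
      simp [ep, Set.image_image]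
    src_eq _ := Subsingleton.elim _ _
    tgt_eq _ := Subsingleton.elim _ _
    con_iff := e.forall_congr_right.mp fun ⟨u, v⟩ => e.forall_congr_right.mp fun ⟨u', v'⟩ =>
      (iff_true_intro (Or.inl trivial)).symm.trans (comp_con_compTransEquiv _ _ u v u' v').symm }

theorem isContention_of_con {k l : ℕ} {N : NetB k l} (h : ∀ t u, N.con t u) : IsContention N :=
  ⟨fun t => h t t, fun t u _ => h u t, fun t u _ => h t u⟩

inductive SubsetVar : Type
  | source
  | cell
  | sink

def subsetAssign : SubsetVar → NetS
  | .source => ⟨0, 1, sourceNet⟩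
  | .cell => ⟨1, 1, choiceNet 1 1 Unit⟩
  | .sink => ⟨1, 0, choiceNet 1 0 Empty⟩

theorem isContention_subsetAssign (x : SubsetVar) : IsContention (subsetAssign x).2.2 := by
  cases x <;> exact isContention_of_con fun _ _ => trivial

theorem hasWidth_leaf_subsetAssign (x : SubsetVar) : HasWidth subsetAssign 1 (.leaf x) := by
  cases x <;> simp [HasWidth, subsetAssign, sourceNet, choiceNet]

def cellChain : ℕ → WExpr SubsetVar
  | 0 => .leaf .sink
  | k + 1 => .seq (.leaf .cell) (cellChain k)

theorem sem_cellChain (k : ℕ) : ∃ X : NetB 1 0,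
    sem subsetAssign (cellChain k) = ⟨1, 0, X⟩ ∧ IsChoiceNet X ∧ Nat.card X.P = k := by
  induction k with
  | zero => exact ⟨_, rfl, isChoiceNet_choiceNet 1 0 Empty, Nat.card_of_isEmpty (α := Empty)⟩
  | succ k ih =>
    obtain ⟨X, hsem, hX, hcard⟩ := ih
    have := X.finP
    refine ⟨comp (choiceNet 1 1 Unit) X, ?_, (isChoiceNet_choiceNet 1 1 Unit).comp hX, ?_⟩
    · simp only [cellChain, sem, hsem]
      exact seqS_mk _ _
    · simp [comp, choiceNet, hcard, add_comm]

theorem wt_cellChain (k : ℕ) : WT subsetAssign (cellChain k) := by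
  induction k with
  | zero => trivial
  | succ k ih =>
    obtain ⟨X, hsem, -⟩ := sem_cellChain k
    exact ⟨trivial, ih, by rw [hsem]; rfl⟩

theorem hasWidth_cellChain (k : ℕ) : HasWidth subsetAssign 1 (cellChain k) := by
  induction k with
  | zero => exact hasWidth_leaf_subsetAssign _
  | succ k ih =>
    obtain ⟨X, hsem, -⟩ := sem_cellChain (k + 1)
    refine ⟨hasWidth_leaf_subsetAssign _, ih, ?_⟩
    change (sem subsetAssign (cellChain (k + 1))).1 ≤ 1 ∧
      (sem subsetAssign (cellChain (k + 1))).2.1 ≤ 1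
    rw [hsem]
    exact ⟨le_rfl, zero_le_one⟩

theorem subsetNet_decompWidth_general (n : ℕ) : HasDecompWidth (subsetNet n) 1 := by
  obtain ⟨X, hsem, hX, hcard⟩ := sem_cellChain n
  have := X.finP
  have hsem' :
      sem subsetAssign (.seq (.leaf .source) (cellChain n)) = ⟨0, 0, comp sourceNet X⟩ := by
    simp only [sem, hsem]
    exact seqS_mk _ _
  refine ⟨SubsetVar, subsetAssign, .seq (.leaf .source) (cellChain n),
    ⟨isContention_subsetAssign, ⟨trivial, wt_cellChain n, by rw [hsem]; rfl⟩, ?_⟩,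
    ⟨hasWidth_leaf_subsetAssign _, hasWidth_cellChain n, ?_⟩⟩
  · rw [hsem']
    refine ⟨rfl, rfl, ⟨?_⟩⟩
    show NetIso (castNet rfl rfl (comp sourceNet X)) _
    rw [castNet_rfl]
    exact sourceCompIsoSubsetNet hX (Finite.equivFinOfCardEq hcard)
  · rw [hsem']
    exact ⟨zero_le_one, zero_le_one⟩

/-- for every `n ≥ 2`, the subset net `P_n` has
decomposition width 1. -/
theorem subsetNet_decompWidth (n : ℕ) (hn : 2 ≤ n) : HasDecompWidth (subsetNet n) 1 :=
  subsetNet_decompWidth_general n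

end NWB
end
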